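/- For every L > 0 and all P, Q ∈ P_1(ℝ^d), the supremum defining D_f^{Γ_L}(P‖Q) is attained: there exists φ^{L,*} ∈ Γ_L such that ∫ φ^{L,*} dP − inf_{ν ∈ ℝ} ( ν + ∫ f*(φ^{L,*} − ν) dQ ) = D_f^{Γ_L}(P‖Q). -/

import Mathlib

open MeasureTheory Filter Set Topology
open scoped Classical

noncomputable section

/-- `ℝ^d` with the Euclidean norm. -/
abbrev Euc (d : ℕ) := EuclideanSpace ℝ (Fin d)

/-- Legendre transform `f*(y) = sup_{t ≥ 0} (t·y − f(t))` of `f : [0,∞) → ℝ`. -/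
def legendre (f : ℝ → ℝ) (y : ℝ) : ℝ :=
  sSup ((fun t => t * y - f t) '' Ici (0 : ℝ))

/-- `Γ_L`: the set of `L`-Lipschitz real-valued functions on `E`. -/
def GammaL (E : Type*) [NormedAddCommGroup E] (L : ℝ) : Set (E → ℝ) :=
  {φ | ∀ x y : E, |φ x - φ y| ≤ L * ‖x - y‖}

/-- The objective `∫ φ dP − inf_ν ( ν + ∫ f*(φ − ν) dQ )`. -/
def dualObj (f : ℝ → ℝ) {E : Type*} [NormedAddCommGroup E] [MeasurableSpace E]
    (φ : E → ℝ) (P Q : Measure E) : ℝ :=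
  (∫ x, φ x ∂P) - sInf (Set.range fun ν : ℝ => ν + ∫ x, legendre f (φ x - ν) ∂Q)

/-- The Lipschitz-regularized `f`-divergence `D_f^{Γ_L}(P‖Q)`. -/
def Dreg (f : ℝ → ℝ) {E : Type*} [NormedAddCommGroup E] [MeasurableSpace E]
    (L : ℝ) (P Q : Measure E) : ℝ :=
  sSup ((fun φ => dualObj f φ P Q) '' GammaL E L)

/-- The 1-Wasserstein metric `W^{Γ_1}(P,Q)` in dual form. -/
def W1 {E : Type*} [NormedAddCommGroup E] [MeasurableSpace E] (P Q : Measure E) : ℝ :=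
  sSup ((fun φ => (∫ x, φ x ∂P) - ∫ x, φ x ∂Q) '' GammaL E 1)

/-- Membership in `P_1`: Borel probability measure with finite first moment. -/
def memP1 {E : Type*} [NormedAddCommGroup E] [MeasurableSpace E] (P : Measure E) : Prop :=
  IsProbabilityMeasure P ∧ Integrable (fun x => ‖x‖) P

/-- Support of a measure: points all of whose open neighborhoods have positive measure. -/
def msupport {E : Type*} [TopologicalSpace E] [MeasurableSpace E] (μ : Measure E) : Set E :=
  {x | ∀ U : Set E, IsOpen U → x ∈ U → 0 < μ U}

/-- The `f`-divergence `D_f(P‖Q) ∈ [0,∞]`, i.e. `∫ f(dP/dQ) dQ` if `P ≪ Q`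
(and the integral is well defined), `+∞` otherwise. -/
def DfE (f : ℝ → ℝ) {E : Type*} [MeasurableSpace E] (P Q : Measure E) : EReal :=
  if P ≪ Q ∧ Integrable (fun x => f ((P.rnDeriv Q x).toReal)) Q
  then ((∫ x, f ((P.rnDeriv Q x).toReal) ∂Q : ℝ) : EReal)
  else ⊤


section ffacts
variable {f : ℝ → ℝ}

lemma exists_subgrad (hconv : ConvexOn ℝ (Ici (0:ℝ)) f) (hf1 : f 1 = 0) :
    ∃ s : ℝ, ∀ t, 0 ≤ t → s * (t - 1) ≤ f t := by
  set S : Set ℝ := (fun u => f u / (u - 1)) '' Ioi 1 with hS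
  have hne : S.Nonempty := ⟨f 2 / (2 - 1), ⟨2, by norm_num, rfl⟩⟩
  have hlow : ∀ u ∈ Ioi (1:ℝ), -(f 0) ≤ f u / (u - 1) := by
    intro u hu
    have h := hconv.slope_mono_adjacent (x := 0) (y := 1) (z := u)
      (mem_Ici.mpr le_rfl) (mem_Ici.mpr (le_trans zero_le_one (le_of_lt hu))) zero_lt_one hu
    rw [hf1] at h
    simpa using h
  have hbdd : BddBelow S := ⟨-(f 0), by rintro _ ⟨u, hu, rfl⟩; exact hlow u hu⟩
  refine ⟨sInf S, fun t ht => ?_⟩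
  rcases lt_trichotomy t 1 with h1 | h1 | h1
  · have hkey : ∀ u ∈ Ioi (1:ℝ), (0 - f t) / (1 - t) ≤ (f u - 0) / (u - 1) := by
      intro u hu
      have := hconv.slope_mono_adjacent (x := t) (y := 1) (z := u)
        (mem_Ici.mpr ht) (mem_Ici.mpr (le_trans zero_le_one (le_of_lt hu))) h1 hu
      rw [hf1] at this
      convert this using 2 <;> ring
    have hle : (0 - f t) / (1 - t) ≤ sInf S := by
      apply le_csInf hne
      rintro _ ⟨u, hu, rfl⟩
      have := hkey u hu
      simpa using this
    have h1t : (0:ℝ) < 1 - t := by linarith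
    rw [div_le_iff₀ h1t] at hle
    nlinarith [sub_nonneg.mpr hle]
  · simp [h1, hf1]
  · have hle : sInf S ≤ f t / (t - 1) := csInf_le hbdd ⟨t, h1, rfl⟩
    have h1t : (0:ℝ) < t - 1 := by linarith
    rw [le_div_iff₀ h1t] at hle
    linarith

lemma legendre_bddAbove (hsl : Tendsto (fun s => f s / s) atTop atTop)
    {s : ℝ} (hsub : ∀ t, 0 ≤ t → s * (t - 1) ≤ f t) (y : ℝ) :
    BddAbove ((fun t => t * y - f t) '' Ici (0 : ℝ)) := by
  obtain ⟨T, hT⟩ := (tendsto_atTop.mp hsl (y + 1)).exists_forall_of_atTop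
  set T' : ℝ := max T 1 with hT'
  refine ⟨max 0 (T' * |y| + |s| * (T' + 1)), ?_⟩
  rintro _ ⟨t, ht, rfl⟩
  dsimp only
  simp only [mem_Ici] at ht
  rcases le_total T' t with h | h
  · have htpos : (0:ℝ) < t := lt_of_lt_of_le zero_lt_one (le_trans (le_max_right T 1) h)
    have := hT t (le_trans (le_max_left T 1) h)
    rw [le_div_iff₀ htpos] at this
    have : t * y - f t ≤ -t := by nlinarith
    have : t * y - f t ≤ 0 := le_trans this (by linarith)
    exact le_trans this (le_max_left _ _)
  · have hT1 : (1:ℝ) ≤ T' := le_max_right T 1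
    have h1 : t * y ≤ T' * |y| := by
      calc t * y ≤ t * |y| := by nlinarith [le_abs_self y]
        _ ≤ T' * |y| := by nlinarith [abs_nonneg y]
    have h2 : -(s * (t - 1)) ≤ |s| * (T' + 1) := by
      have : |s * (t - 1)| ≤ |s| * (T' + 1) := by
        rw [abs_mul]
        apply mul_le_mul_of_nonneg_left _ (abs_nonneg s)
        rw [abs_le]; constructor <;> nlinarith
      nlinarith [neg_abs_le (s * (t - 1))]
    have h3 : t * y - f t ≤ t * y - s * (t - 1) := by linarith [hsub t ht]
    refine le_trans ?_ (le_max_right _ _)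
    linarith

lemma legendre_ge (hsl : Tendsto (fun s => f s / s) atTop atTop)
    {s : ℝ} (hsub : ∀ t, 0 ≤ t → s * (t - 1) ≤ f t) {t : ℝ} (ht : 0 ≤ t) (y : ℝ) :
    t * y - f t ≤ legendre f y :=
  le_csSup (legendre_bddAbove hsl hsub y) ⟨t, ht, rfl⟩

lemma legendre_mono (hsl : Tendsto (fun s => f s / s) atTop atTop)
    {s : ℝ} (hsub : ∀ t, 0 ≤ t → s * (t - 1) ≤ f t) : Monotone (legendre f) := by
  intro a b hab
  apply csSup_le (nonempty_Ici.image _)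
  rintro _ ⟨t, ht, rfl⟩
  dsimp only
  exact le_trans (by nlinarith [mem_Ici.mp ht]) (legendre_ge hsl hsub (mem_Ici.mp ht) b)

lemma legendre_convexOn (hsl : Tendsto (fun s => f s / s) atTop atTop)
    {s : ℝ} (hsub : ∀ t, 0 ≤ t → s * (t - 1) ≤ f t) :
    ConvexOn ℝ univ (legendre f) := by
  refine ⟨convex_univ, fun y _ z _ a b ha hb hab => ?_⟩
  apply csSup_le (nonempty_Ici.image _)
  rintro _ ⟨t, ht, rfl⟩
  dsimp only
  have h1 := legendre_ge hsl hsub (mem_Ici.mp ht) y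
  have h2 := legendre_ge hsl hsub (mem_Ici.mp ht) z
  have key : t * (a • y + b • z) - f t = a * (t * y - f t) + b * (t * z - f t) := by
    simp only [smul_eq_mul]; linear_combination (f t) * hab
  rw [key]
  have := mul_le_mul_of_nonneg_left h1 ha
  have := mul_le_mul_of_nonneg_left h2 hb
  simp only [smul_eq_mul]
  linarith

lemma legendre_continuous (hsl : Tendsto (fun s => f s / s) atTop atTop)
    {s : ℝ} (hsub : ∀ t, 0 ≤ t → s * (t - 1) ≤ f t) : Continuous (legendre f) :=
  continuousOn_univ.mp ((legendre_convexOn hsl hsub).continuousOn isOpen_univ)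

end ffacts


section measside
variable {E : Type*} [NormedAddCommGroup E] [MeasurableSpace E] [OpensMeasurableSpace E]
  {L : ℝ} {φ : E → ℝ}

lemma gammaL_continuous (hφ : φ ∈ GammaL E L) : Continuous φ := by
  have : LipschitzWith (Real.toNNReal L) φ := by
    apply LipschitzWith.of_dist_le_mul
    intro x y
    rw [Real.dist_eq, dist_eq_norm]
    exact le_trans (hφ x y) (by
      apply mul_le_mul_of_nonneg_right (Real.le_coe_toNNReal L) (norm_nonneg _))
  exact this.continuous

lemma gammaL_integrable {μ : Measure E} (hμ : memP1 μ) (hφ : φ ∈ GammaL E L) :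
    Integrable φ μ := by
  haveI := hμ.1
  refine Integrable.mono' ((hμ.2.const_mul L).add (integrable_const |φ 0|))
    (gammaL_continuous hφ).aestronglyMeasurable ?_
  filter_upwards with x
  have h := hφ x 0
  rw [sub_zero] at h
  rw [Real.norm_eq_abs]
  calc |φ x| ≤ |φ x - φ 0| + |φ 0| := by
        have := abs_sub_abs_le_abs_sub (φ x) (φ 0); nlinarith [abs_sub (φ x) (φ 0)]
    _ ≤ L * ‖x‖ + |φ 0| := by linarith

lemma const_mem_gammaL (hL : 0 ≤ L) (c : ℝ) : (fun _ : E => c) ∈ GammaL E L := by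
  intro x y
  simp [mul_nonneg hL (norm_nonneg _)]

lemma add_const_mem_gammaL (hφ : φ ∈ GammaL E L) (c : ℝ) :
    (fun x => φ x + c) ∈ GammaL E L := by
  intro x y
  simpa using hφ x y

lemma integral_add_const {μ : Measure E} (hμ : memP1 μ) (hφi : Integrable φ μ) (c : ℝ) :
    ∫ x, (φ x + c) ∂μ = (∫ x, φ x ∂μ) + c := by
  haveI := hμ.1
  rw [integral_add hφi (integrable_const c), integral_const]
  simp

end measside

lemma sInf_image_add (S : Set ℝ) (hne : S.Nonempty) (hbdd : BddBelow S) (c : ℝ) :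
    sInf ((fun r => r + c) '' S) = sInf S + c := by
  obtain ⟨b, hb⟩ := hbdd
  have hbddi : BddBelow ((fun r => r + c) '' S) := by
    refine ⟨b + c, ?_⟩
    rintro _ ⟨x, hx, rfl⟩
    have := hb hx
    simp only
    linarith
  apply le_antisymm
  · have h1 : ∀ x ∈ S, sInf ((fun r => r + c) '' S) - c ≤ x := by
      intro x hx
      have := csInf_le hbddi ⟨x, hx, rfl⟩
      simp only at this
      linarith
    have := le_csInf hne h1
    linarith
  · apply le_csInf (hne.image _)
    rintro _ ⟨x, hx, rfl⟩
    have := csInf_le ⟨b, hb⟩ hx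
    simp only
    linarith

section main
variable {E : Type*} [NormedAddCommGroup E] [MeasurableSpace E] [OpensMeasurableSpace E]
  {L : ℝ} {φ : E → ℝ} {f : ℝ → ℝ} {P Q : Measure E}

lemma integrand_shift (c ν : ℝ) (φ : E → ℝ) :
    (∫ x, legendre f ((φ x + c) - ν) ∂Q) = ∫ x, legendre f (φ x - (ν - c)) ∂Q := by
  have : (fun x => (φ x + c) - ν) = fun x => φ x - (ν - c) := by funext x; ring
  show (∫ x, legendre f ((φ x + c) - ν) ∂Q) = _
  rw [show (fun x => legendre f ((φ x + c) - ν)) = fun x => legendre f (φ x - (ν - c)) by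
    funext x; congr 1; ring]

lemma range_shift (c : ℝ) (φ : E → ℝ) :
    (Set.range fun ν : ℝ => ν + ∫ x, legendre f ((φ x + c) - ν) ∂Q)
      = (fun r => r + c) '' (Set.range fun ν : ℝ => ν + ∫ x, legendre f (φ x - ν) ∂Q) := by
  ext r
  constructor
  · rintro ⟨ν, rfl⟩
    refine ⟨(ν - c) + ∫ x, legendre f (φ x - (ν - c)) ∂Q, ⟨ν - c, rfl⟩, ?_⟩
    simp only
    rw [integrand_shift]
    ring
  · rintro ⟨_, ⟨ν, rfl⟩, rfl⟩
    refine ⟨ν + c, ?_⟩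
    simp only
    rw [integrand_shift]
    have : ν + c - c = ν := by ring
    rw [this]
    ring

end main


section main2
variable {E : Type*} [NormedAddCommGroup E] [MeasurableSpace E] [OpensMeasurableSpace E]
  {L : ℝ} {φ : E → ℝ} {f : ℝ → ℝ} {P Q : Measure E} {s : ℝ}

lemma key_integrable (hQ : memP1 Q) (hsl : Tendsto (fun s => f s / s) atTop atTop)
    (hsub : ∀ t, 0 ≤ t → s * (t - 1) ≤ f t) (hφc : Continuous φ)
    (hbdd : BddBelow (Set.range fun ν : ℝ => ν + ∫ x, legendre f (φ x - ν) ∂Q)) (ν : ℝ) :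
    Integrable (fun x => legendre f (φ x - ν)) Q := by
  haveI := hQ.1
  by_contra hni
  have hmono : ∀ ν' ≤ ν, ¬ Integrable (fun x => legendre f (φ x - ν')) Q := by
    intro ν' hν' hint
    apply hni
    refine Integrable.mono' ((integrable_const |f 0|).add hint.abs)
      (((legendre_continuous hsl hsub).comp (hφc.sub continuous_const)).aestronglyMeasurable) ?_
    filter_upwards with x
    rw [Real.norm_eq_abs, abs_le]
    have hle : legendre f (φ x - ν) ≤ legendre f (φ x - ν') :=
      legendre_mono hsl hsub (by linarith)
    have hge : -(f 0) ≤ legendre f (φ x - ν) := by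
      have := legendre_ge hsl hsub (le_refl 0) (φ x - ν)
      simpa using this
    have h1 : -|f 0| ≤ -(f 0) := neg_le_neg (le_abs_self _)
    have h2 : (0:ℝ) ≤ |legendre f (φ x - ν')| := abs_nonneg _
    have h3 : legendre f (φ x - ν') ≤ |legendre f (φ x - ν')| := le_abs_self _
    have h4 : (0:ℝ) ≤ |f 0| := abs_nonneg _
    constructor
    · simp only [Pi.add_apply]
      linarith
    · simp only [Pi.add_apply]
      linarith
  obtain ⟨b, hb⟩ := hbdd
  have h1 : b ≤ min ν (b - 1) + ∫ x, legendre f (φ x - min ν (b - 1)) ∂Q :=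
    hb ⟨min ν (b - 1), rfl⟩
  rw [integral_undef (hmono _ (min_le_left _ _))] at h1
  have := min_le_right ν (b - 1)
  linarith

lemma integral_sub_const (hQ : memP1 Q) (hφi : Integrable φ Q) (ν : ℝ) :
    ∫ x, (φ x - ν) ∂Q = (∫ x, φ x ∂Q) - ν := by
  haveI := hQ.1
  have h2 : Integrable (fun _x : E => ν) Q := integrable_const ν
  rw [integral_sub hφi h2, integral_const]
  simp [measure_univ]

lemma g_lower_one (hQ : memP1 Q) (hf1 : f 1 = 0)
    (hsl : Tendsto (fun s => f s / s) atTop atTop)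
    (hsub : ∀ t, 0 ≤ t → s * (t - 1) ≤ f t) (hφ : φ ∈ GammaL E L) {ν : ℝ}
    (hint : Integrable (fun x => legendre f (φ x - ν)) Q) :
    (∫ x, φ x ∂Q) ≤ ν + ∫ x, legendre f (φ x - ν) ∂Q := by
  haveI := hQ.1
  have hint2 : Integrable (fun x => φ x - ν) Q :=
    (gammaL_integrable hQ hφ).sub (integrable_const ν)
  have hmono : (∫ x, (φ x - ν) ∂Q) ≤ ∫ x, legendre f (φ x - ν) ∂Q := by
    apply integral_mono hint2 hint
    intro x
    have := legendre_ge hsl hsub (zero_le_one) (φ x - ν)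
    simpa [hf1] using this
  rw [integral_sub_const hQ (gammaL_integrable hQ hφ)] at hmono
  linarith

lemma g_lower_zero (hQ : memP1 Q)
    (hsl : Tendsto (fun s => f s / s) atTop atTop)
    (hsub : ∀ t, 0 ≤ t → s * (t - 1) ≤ f t) {ν : ℝ}
    (hint : Integrable (fun x => legendre f (φ x - ν)) Q) :
    ν - f 0 ≤ ν + ∫ x, legendre f (φ x - ν) ∂Q := by
  haveI := hQ.1
  have hint2 : Integrable (fun _x : E => -(f 0)) Q := integrable_const _
  have hmono : (∫ _x, (-(f 0)) ∂Q) ≤ ∫ x, legendre f (φ x - ν) ∂Q := by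
    apply integral_mono hint2 hint
    intro x
    have := legendre_ge hsl hsub (le_refl 0) (φ x - ν)
    simpa using this
  rw [integral_const] at hmono
  simp only [measure_univ, ENNReal.toReal_one, one_smul, probReal_univ] at hmono
  linarith

lemma g_lower_two (hQ : memP1 Q)
    (hsl : Tendsto (fun s => f s / s) atTop atTop)
    (hsub : ∀ t, 0 ≤ t → s * (t - 1) ≤ f t) (hφ : φ ∈ GammaL E L) {ν : ℝ}
    (hint : Integrable (fun x => legendre f (φ x - ν)) Q) :
    -ν + 2 * (∫ x, φ x ∂Q) - f 2 ≤ ν + ∫ x, legendre f (φ x - ν) ∂Q := by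
  haveI := hQ.1
  have hint1 : Integrable (fun x => φ x - ν) Q :=
    (gammaL_integrable hQ hφ).sub (integrable_const ν)
  have hint2 : Integrable (fun x => 2 * (φ x - ν) - f 2) Q :=
    (hint1.const_mul 2).sub (integrable_const (f 2))
  have hmono : (∫ x, (2 * (φ x - ν) - f 2) ∂Q) ≤ ∫ x, legendre f (φ x - ν) ∂Q := by
    apply integral_mono hint2 hint
    intro x
    have := legendre_ge hsl hsub (by norm_num : (0:ℝ) ≤ 2) (φ x - ν)
    simpa using this
  have heq : (∫ x, (2 * (φ x - ν) - f 2) ∂Q) = 2 * ((∫ x, φ x ∂Q) - ν) - f 2 := by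
    rw [integral_sub (hint1.const_mul 2) (integrable_const (f 2)), integral_const_mul,
      integral_sub_const hQ (gammaL_integrable hQ hφ), integral_const]
    simp [measure_univ]
  rw [heq] at hmono
  linarith

end main2

section main3
variable {E : Type*} [NormedAddCommGroup E] [MeasurableSpace E] [OpensMeasurableSpace E]
  {L : ℝ} {φ : E → ℝ} {f : ℝ → ℝ} {P Q : Measure E} {s : ℝ}

lemma dualObj_shift (hP : memP1 P) (hφi : Integrable φ P)
    (hbdd : BddBelow (Set.range fun ν : ℝ => ν + ∫ x, legendre f (φ x - ν) ∂Q)) (c : ℝ) :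
    dualObj f (fun x => φ x + c) P Q = dualObj f φ P Q := by
  unfold dualObj
  rw [range_shift, sInf_image_add _ (Set.range_nonempty _) hbdd, integral_add_const hP hφi]
  ring

lemma dualObj_notbdd (hP : memP1 P) (hφi : Integrable φ P)
    (hnb : ¬ BddBelow (Set.range fun ν : ℝ => ν + ∫ x, legendre f (φ x - ν) ∂Q)) (c : ℝ) :
    dualObj f (fun x => φ x + c) P Q = (∫ x, φ x ∂P) + c := by
  unfold dualObj
  rw [range_shift]
  have hnb2 : ¬ BddBelow ((fun r => r + c) ''
      (Set.range fun ν : ℝ => ν + ∫ x, legendre f (φ x - ν) ∂Q)) := by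
    rintro ⟨b, hb⟩
    apply hnb
    refine ⟨b - c, fun x hx => ?_⟩
    have := hb ⟨x, hx, rfl⟩
    simp only at this
    linarith
  rw [Real.sInf_of_not_bddBelow hnb2, integral_add_const hP hφi]
  ring

lemma dualObj_zero_fn (hP : memP1 P) (hQ : memP1 Q) (hf1 : f 1 = 0)
    (hsl : Tendsto (fun s => f s / s) atTop atTop)
    (hsub : ∀ t, 0 ≤ t → s * (t - 1) ≤ f t) :
    dualObj f (fun _ : E => (0:ℝ)) P Q = 0 := by
  haveI := hQ.1
  unfold dualObj
  rw [integral_zero]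
  rw [show (fun ν : ℝ => ν + ∫ _x : E, legendre f ((0:ℝ) - ν) ∂Q)
      = (fun ν : ℝ => ν + legendre f (-ν)) from funext fun ν => by
    rw [integral_const]; simp [measure_univ]]
  have hlow : ∀ ν : ℝ, (0:ℝ) ≤ ν + legendre f (-ν) := by
    intro ν
    have := legendre_ge hsl hsub zero_le_one (-ν)
    simp only [one_mul, hf1, sub_zero] at this
    linarith
  have hub : legendre f s ≤ s := by
    apply csSup_le (nonempty_Ici.image _)
    rintro _ ⟨t, ht, rfl⟩
    have := hsub t (mem_Ici.mp ht)
    simp only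
    nlinarith
  have hlb : (0:ℝ) ∈ lowerBounds (Set.range fun ν : ℝ => ν + legendre f (-ν)) := by
    rintro x ⟨ν, rfl⟩
    exact hlow ν
  have h0 : sInf (Set.range fun ν : ℝ => ν + legendre f (-ν)) = 0 := by
    apply le_antisymm
    · have hmem : (-s) + legendre f (-(-s)) ∈ Set.range fun ν : ℝ => ν + legendre f (-ν) :=
        ⟨-s, rfl⟩
      have h1 := csInf_le ⟨0, hlb⟩ hmem
      rw [neg_neg] at h1
      linarith
    · exact le_csInf (Set.range_nonempty _) hlb
  rw [h0]
  ring

lemma integral_abs_le (hQ : memP1 Q) (hc : Continuous φ) (hbd : ∀ x, |φ x| ≤ L * ‖x‖) :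
    |∫ x, φ x ∂Q| ≤ L * ∫ x, ‖x‖ ∂Q := by
  haveI := hQ.1
  have hφi : Integrable φ Q := by
    refine Integrable.mono' (hQ.2.const_mul L) hc.aestronglyMeasurable ?_
    filter_upwards with x
    rw [Real.norm_eq_abs]; exact hbd x
  calc |∫ x, φ x ∂Q| ≤ ∫ x, |φ x| ∂Q := by
        simpa [Real.norm_eq_abs] using norm_integral_le_integral_norm (μ := Q) φ
    _ ≤ ∫ x, L * ‖x‖ ∂Q := integral_mono hφi.abs (hQ.2.const_mul L) (fun x => hbd x)
    _ = L * ∫ x, ‖x‖ ∂Q := integral_const_mul L _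

lemma integral_le_of_lin (hQ : memP1 Q) (hc : Continuous φ) (hbd : ∀ x, |φ x| ≤ L * ‖x‖) :
    (∫ x, φ x ∂Q) ≤ L * ∫ x, ‖x‖ ∂Q :=
  le_trans (le_abs_self _) (integral_abs_le hQ hc hbd)

end main3

section extraction
variable {E : Type*} [NormedAddCommGroup E]

lemma exists_pointwise_limit [TopologicalSpace.SeparableSpace E] [Nonempty E]
    {L : ℝ} (hL : 0 < L) (φn : ℕ → E → ℝ) (hΓ : ∀ n, φn n ∈ GammaL E L)
    (hbd : ∀ n x, |φn n x| ≤ L * ‖x‖) :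
    ∃ (φ : E → ℝ) (g : ℕ → ℕ), StrictMono g ∧ φ ∈ GammaL E L ∧
      (∀ x, |φ x| ≤ L * ‖x‖) ∧ ∀ x, Tendsto (fun i => φn (g i) x) atTop (𝓝 (φ x)) := by
  classical
  set D : ℕ → E := TopologicalSpace.denseSeq E with hDdef
  have hD : DenseRange D := TopologicalSpace.denseRange_denseSeq E
  set K : ℕ → ℝ := fun k => L * ‖D k‖ with hK
  let y : ℕ → ∀ k : ℕ, (Icc (-(K k)) (K k) : Set ℝ) := fun n k =>
    ⟨φn n (D k), by
      rw [mem_Icc]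
      have := abs_le.mp (hbd n (D k))
      exact this⟩
  obtain ⟨ψ, g, hg, hconv⟩ := CompactSpace.tendsto_subseq y
  have hpt : ∀ k, Tendsto (fun i => φn (g i) (D k)) atTop (𝓝 ((ψ k : ℝ))) := by
    intro k
    have h1 : Tendsto (fun i => y (g i) k) atTop (𝓝 (ψ k)) :=
      ((continuous_apply k).tendsto ψ).comp hconv
    exact (continuous_subtype_val.tendsto _).comp h1
  set ρ : ℕ → ℝ := fun k => (ψ k : ℝ) with hρdef
  have hρ : ∀ k k', |ρ k - ρ k'| ≤ L * ‖D k - D k'‖ := by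
    intro k k'
    have ht : Tendsto (fun i => |φn (g i) (D k) - φn (g i) (D k')|) atTop
        (𝓝 |ρ k - ρ k'|) := ((hpt k).sub (hpt k')).abs
    exact le_of_tendsto ht (Eventually.of_forall fun i => hΓ (g i) _ _)
  set φ : E → ℝ := fun x => ⨅ k, (ρ k + L * ‖x - D k‖) with hφdef
  have htri : ∀ (a b c : E), ‖a - c‖ ≤ ‖a - b‖ + ‖b - c‖ := by
    intro a b c
    simpa [dist_eq_norm] using dist_triangle a b c
  have hbdb : ∀ x : E, BddBelow (Set.range fun k => ρ k + L * ‖x - D k‖) := by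
    intro x
    refine ⟨ρ 0 - L * ‖x - D 0‖, ?_⟩
    rintro _ ⟨k, rfl⟩
    have h1 : ρ 0 - ρ k ≤ L * ‖D 0 - D k‖ := le_trans (le_abs_self _) (hρ 0 k)
    have h2 : ‖D 0 - D k‖ ≤ ‖D 0 - x‖ + ‖x - D k‖ := htri _ _ _
    have h3 : L * ‖D 0 - D k‖ ≤ L * (‖D 0 - x‖ + ‖x - D k‖) :=
      mul_le_mul_of_nonneg_left h2 hL.le
    have h4 : ‖D 0 - x‖ = ‖x - D 0‖ := norm_sub_rev _ _
    simp only
    nlinarith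
  have hle : ∀ (x : E) (k : ℕ), φ x ≤ ρ k + L * ‖x - D k‖ := fun x k => ciInf_le (hbdb x) k
  have key : ∀ x z : E, φ x ≤ φ z + L * ‖x - z‖ := by
    intro x z
    have h : ∀ k, φ x - L * ‖x - z‖ ≤ ρ k + L * ‖z - D k‖ := by
      intro k
      have h1 := hle x k
      have h2 : ‖x - D k‖ ≤ ‖x - z‖ + ‖z - D k‖ := htri _ _ _
      have h3 : L * ‖x - D k‖ ≤ L * (‖x - z‖ + ‖z - D k‖) :=
        mul_le_mul_of_nonneg_left h2 hL.le
      nlinarith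
    have := le_ciInf h
    have hφz : φ z = ⨅ k, (ρ k + L * ‖z - D k‖) := rfl
    rw [← hφz] at this
    linarith
  have hΓφ : φ ∈ GammaL E L := by
    intro x z
    rw [abs_sub_le_iff]
    constructor
    · linarith [key x z]
    · rw [norm_sub_rev]
      linarith [key z x]
  have hagree : ∀ k, φ (D k) = ρ k := by
    intro k
    apply le_antisymm
    · have := hle (D k) k
      simpa using this
    · apply le_ciInf
      intro k'
      have h1 : ρ k - ρ k' ≤ L * ‖D k - D k'‖ := le_trans (le_abs_self _) (hρ k k')
      linarith
  have hconvx : ∀ x, Tendsto (fun i => φn (g i) x) atTop (𝓝 (φ x)) := by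
    intro x
    rw [Metric.tendsto_atTop]
    intro ε hε
    obtain ⟨k, hk⟩ := hD.exists_dist_lt x (show (0:ℝ) < ε / (4 * (L + 1)) by positivity)
    obtain ⟨N, hN⟩ := Metric.tendsto_atTop.mp (hpt k) (ε / 4) (by positivity)
    refine ⟨N, fun i hi => ?_⟩
    have h1 : |φn (g i) x - φn (g i) (D k)| ≤ L * ‖x - D k‖ := hΓ (g i) _ _
    have h2 : |φn (g i) (D k) - ρ k| < ε / 4 := by
      have := hN i hi
      rwa [Real.dist_eq] at this
    have h3 : |φ (D k) - φ x| ≤ L * ‖D k - x‖ := hΓφ _ _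
    have hxk : ‖x - D k‖ < ε / (4 * (L + 1)) := by
      rwa [dist_eq_norm] at hk
    have hxk' : ‖D k - x‖ = ‖x - D k‖ := norm_sub_rev _ _
    have h41 : (0:ℝ) < 4 * (L + 1) := by positivity
    have hcalc : (L + 1) * (ε / (4 * (L + 1))) = ε / 4 := by
      field_simp
    have hfrac : L * (ε / (4 * (L + 1))) ≤ ε / 4 := by
      have ha : (0:ℝ) ≤ ε / (4 * (L + 1)) := le_of_lt (by positivity)
      nlinarith
    have hL4 : L * ‖x - D k‖ ≤ ε / 4 :=
      le_trans (mul_le_mul_of_nonneg_left hxk.le hL.le) hfrac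
    have htr1 : |φn (g i) x - φ x| ≤ |φn (g i) x - φn (g i) (D k)| + |φn (g i) (D k) - φ x| :=
      abs_sub_le _ _ _
    have htr2 : |φn (g i) (D k) - φ x| ≤ |φn (g i) (D k) - ρ k| + |ρ k - φ x| :=
      abs_sub_le _ _ _
    have h5 : |ρ k - φ x| ≤ ε / 4 := by
      have h3' : |ρ k - φ x| ≤ L * ‖D k - x‖ := by rw [← hagree k]; exact h3
      rw [hxk'] at h3'
      exact le_trans h3' hL4
    rw [Real.dist_eq]
    calc |φn (g i) x - φ x| ≤ L * ‖x - D k‖ + (|φn (g i) (D k) - ρ k| + |ρ k - φ x|) := by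
          linarith
      _ < ε / 4 + (ε / 4 + ε / 4) := by
          have := h2
          have := h5
          linarith [hL4]
      _ < ε := by linarith
  refine ⟨φ, g, hg, hΓφ, ?_, hconvx⟩
  intro x
  have habs : Tendsto (fun i => |φn (g i) x|) atTop (𝓝 |φ x|) := (hconvx x).abs
  exact le_of_tendsto habs (Eventually.of_forall fun i => hbd (g i) x)

end extraction


theorem Dreg_optimizer_exists
    {d : ℕ} (hd : 1 ≤ d)
    (f : ℝ → ℝ) (hconv : StrictConvexOn ℝ (Ici (0:ℝ)) f)
    (hlsc : LowerSemicontinuousOn f (Ici (0:ℝ)))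
    (hsl : Tendsto (fun s => f s / s) atTop atTop)
    (hf1 : f 1 = 0)
    (L : ℝ) (hL : 0 < L)
    (P Q : Measure (Euc d)) (hP : memP1 P) (hQ : memP1 Q) :
    ∃ φ ∈ GammaL (Euc d) L, dualObj f φ P Q = Dreg f L P Q := by
  classical
  obtain ⟨s, hsub⟩ := exists_subgrad hconv.convexOn hf1
  haveI hPp := hP.1
  haveI hQp := hQ.1
  by_cases hA : ∀ φ ∈ GammaL (Euc d) L,
      BddBelow (Set.range fun ν : ℝ => ν + ∫ x, legendre f (φ x - ν) ∂Q)
  swap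
  · -- Case A : some φ₀ has non-bddBelow inf set; then Dreg = 0 and constants attain it
    push_neg at hA
    obtain ⟨φ₀, hφ₀, hnb⟩ := hA
    have hφ₀i : Integrable φ₀ P := gammaL_integrable hP hφ₀
    have hDreg : Dreg f L P Q = 0 := by
      apply Real.sSup_of_not_bddAbove
      rintro ⟨b, hb⟩
      set c := b + 1 - ∫ x, φ₀ x ∂P with hc
      have hmem : dualObj f (fun x => φ₀ x + c) P Q ∈
          (fun φ => dualObj f φ P Q) '' GammaL (Euc d) L :=
        ⟨_, add_const_mem_gammaL hφ₀ c, rfl⟩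
      have hble := hb hmem
      rw [dualObj_notbdd hP hφ₀i hnb c] at hble
      rw [hc] at hble
      linarith
    refine ⟨fun _ => 0, const_mem_gammaL hL.le 0, ?_⟩
    rw [dualObj_zero_fn hP hQ hf1 hsl hsub, hDreg]
  · -- Case B
    set MP := ∫ x, ‖x‖ ∂P with hMP
    set MQ := ∫ x, ‖x‖ ∂Q with hMQ
    have himg_ne : ((fun φ => dualObj f φ P Q) '' GammaL (Euc d) L).Nonempty :=
      ⟨_, ⟨fun _ => 0, const_mem_gammaL hL.le 0, rfl⟩⟩
    have hintB : ∀ φ ∈ GammaL (Euc d) L, ∀ ν : ℝ,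
        Integrable (fun x => legendre f (φ x - ν)) Q := fun φ hφ ν =>
      key_integrable hQ hsl hsub (gammaL_continuous hφ) (hA φ hφ) ν
    have hub : ∀ φ ∈ GammaL (Euc d) L, dualObj f φ P Q ≤ L * MP + L * MQ := by
      intro φ hφ
      have h1 : (∫ x, φ x ∂Q) ≤
          sInf (Set.range fun ν : ℝ => ν + ∫ x, legendre f (φ x - ν) ∂Q) := by
        apply le_csInf (Set.range_nonempty _)
        rintro _ ⟨ν, rfl⟩
        exact g_lower_one hQ hf1 hsl hsub hφ (hintB φ hφ ν)
      set c := φ 0 with hcdef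
      have hbnd : ∀ x, |φ x - c| ≤ L * ‖x‖ := by
        intro x
        have := hφ x 0
        rwa [sub_zero] at this
      have hcont : Continuous (fun x => φ x - c) := (gammaL_continuous hφ).sub continuous_const
      have h2 : (∫ x, (φ x - c) ∂P) ≤ L * MP := integral_le_of_lin hP hcont hbnd
      have h3 : |∫ x, (φ x - c) ∂Q| ≤ L * MQ := integral_abs_le hQ hcont hbnd
      rw [integral_sub_const hP (gammaL_integrable hP hφ)] at h2
      rw [integral_sub_const hQ (gammaL_integrable hQ hφ)] at h3
      have h4 : -(L * MQ) ≤ (∫ x, φ x ∂Q) - c := by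
        have := neg_abs_le ((∫ x, φ x ∂Q) - c)
        linarith
      unfold dualObj
      linarith
    have hbddA : BddAbove ((fun φ => dualObj f φ P Q) '' GammaL (Euc d) L) := by
      refine ⟨L * MP + L * MQ, ?_⟩
      rintro _ ⟨φ, hφ, rfl⟩
      exact hub φ hφ
    have hDle : ∀ φ ∈ GammaL (Euc d) L, dualObj f φ P Q ≤ Dreg f L P Q :=
      fun φ hφ => le_csSup hbddA ⟨φ, hφ, rfl⟩
    have hseq : ∀ n : ℕ, ∃ φ, φ ∈ GammaL (Euc d) L ∧
        Dreg f L P Q - 1/(n+1) < dualObj f φ P Q := by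
      intro n
      have hpos : (0:ℝ) < 1/(n+1) := by positivity
      have hlt : Dreg f L P Q - 1/(n+1) <
          sSup ((fun φ => dualObj f φ P Q) '' GammaL (Euc d) L) := by
        have : sSup ((fun φ => dualObj f φ P Q) '' GammaL (Euc d) L) = Dreg f L P Q := rfl
        rw [this]
        linarith
      obtain ⟨v, ⟨φ, hφ, rfl⟩, hv⟩ := exists_lt_of_lt_csSup himg_ne hlt
      exact ⟨φ, hφ, hv⟩
    choose ψn hψΓ hψlt using hseq
    set φn : ℕ → Euc d → ℝ := fun n x => ψn n x + (-(ψn n 0)) with hφndef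
    have hφnΓ : ∀ n, φn n ∈ GammaL (Euc d) L := fun n => add_const_mem_gammaL (hψΓ n) _
    have hφnbd : ∀ n x, |φn n x| ≤ L * ‖x‖ := by
      intro n x
      have h := hψΓ n x 0
      rw [sub_zero] at h
      simpa [hφndef, sub_eq_add_neg] using h
    have hφnval : ∀ n, dualObj f (φn n) P Q = dualObj f (ψn n) P Q := fun n =>
      dualObj_shift hP (gammaL_integrable hP (hψΓ n)) (hA _ (hψΓ n)) _
    have hφnlt : ∀ n, Dreg f L P Q - 1/(n+1) < dualObj f (φn n) P Q := by
      intro n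
      rw [hφnval]
      exact hψlt n
    obtain ⟨φii, g, hg, hΓii, hbdii, hconvii⟩ := exists_pointwise_limit hL φn hφnΓ hφnbd
    have hAconv : Tendsto (fun i => ∫ x, φn (g i) x ∂P) atTop (𝓝 (∫ x, φii x ∂P)) := by
      exact tendsto_integral_of_dominated_convergence (fun x => L * ‖x‖)
        (fun i => (gammaL_continuous (hφnΓ (g i))).aestronglyMeasurable)
        (hP.2.const_mul L)
        (fun i => Eventually.of_forall fun x => by
          rw [Real.norm_eq_abs]; exact hφnbd (g i) x)
        (Eventually.of_forall fun x => hconvii x)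
    have honediv : Tendsto (fun n : ℕ => 1/((n:ℝ)+1)) atTop (𝓝 0) :=
      tendsto_one_div_add_atTop_nhds_zero_nat
    have hDconv : Tendsto (fun i => dualObj f (φn (g i)) P Q) atTop (𝓝 (Dreg f L P Q)) := by
      apply tendsto_of_tendsto_of_tendsto_of_le_of_le
        (g := fun i : ℕ => Dreg f L P Q - 1/((i:ℝ)+1)) (h := fun _ => Dreg f L P Q)
      · have h2 := (tendsto_const_nhds : Tendsto (fun _ : ℕ => Dreg f L P Q) atTop (𝓝 (Dreg f L P Q))).sub honediv
        simpa using h2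
      · exact tendsto_const_nhds
      · intro i
        have h1 : (1:ℝ)/((g i : ℝ)+1) ≤ 1/((i:ℝ)+1) := by
          apply one_div_le_one_div_of_le (by positivity)
          have hle : i ≤ g i := hg.le_apply
          exact_mod_cast Nat.add_le_add_right hle 1
        have := hφnlt (g i)
        linarith
      · exact fun i => hDle _ (hφnΓ (g i))
    set sI : ℕ → ℝ := fun i =>
      sInf (Set.range fun ν : ℝ => ν + ∫ x, legendre f (φn (g i) x - ν) ∂Q) with hsIdef
    have hsIval : ∀ i, sI i = (∫ x, φn (g i) x ∂P) - dualObj f (φn (g i)) P Q := by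
      intro i
      simp only [hsIdef, dualObj]
      ring
    set σ := (∫ x, φii x ∂P) - Dreg f L P Q with hσdef
    have hsconv : Tendsto sI atTop (𝓝 σ) := by
      apply Tendsto.congr (fun i => (hsIval i).symm)
      exact hAconv.sub hDconv
    have hνex : ∀ i, ∃ νv : ℝ,
        (νv + ∫ x, legendre f (φn (g i) x - νv) ∂Q) < sI i + 1/((i:ℝ)+1) := by
      intro i
      have hpos : (0:ℝ) < 1/((i:ℝ)+1) := by positivity
      have hlt : sI i < sI i + 1/((i:ℝ)+1) := by linarith
      obtain ⟨v, ⟨νv, rfl⟩, hv⟩ := exists_lt_of_csInf_lt (Set.range_nonempty _) hlt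
      exact ⟨νv, hv⟩
    choose ν hν using hνex
    have hQint : ∀ i, |∫ x, φn (g i) x ∂Q| ≤ L * MQ := fun i =>
      integral_abs_le hQ (gammaL_continuous (hφnΓ (g i))) (hφnbd (g i))
    have hPint : ∀ i, |∫ x, φn (g i) x ∂P| ≤ L * MP := fun i =>
      integral_abs_le hP (gammaL_continuous (hφnΓ (g i))) (hφnbd (g i))
    have hone_le : ∀ i : ℕ, (1:ℝ)/((i:ℝ)+1) ≤ 1 := by
      intro i
      rw [div_le_one (by positivity)]
      linarith [Nat.cast_nonneg (α := ℝ) i]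
    have hsIub : ∀ i, sI i ≤ L * MP - Dreg f L P Q + 1 := by
      intro i
      rw [hsIval i]
      have h1 := hφnlt (g i)
      have h2 : (1:ℝ)/((g i : ℝ)+1) ≤ 1 := hone_le (g i)
      have h3 := le_abs_self (∫ x, φn (g i) x ∂P)
      have := hPint i
      linarith
    have hsIlb : ∀ i, -(L*MQ) ≤ sI i := by
      intro i
      apply le_csInf (Set.range_nonempty _)
      rintro _ ⟨νv, rfl⟩
      dsimp only
      have h1 := g_lower_one hQ hf1 hsl hsub (hφnΓ (g i)) (hintB _ (hφnΓ (g i)) νv)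
      have h2 := neg_abs_le (∫ x, φn (g i) x ∂Q)
      have := hQint i
      linarith
    set R := max (L * MP - Dreg f L P Q + 2 + f 0)
        (L * MP - Dreg f L P Q + 2 + f 2 + 2*(L*MQ)) with hRdef
    have hνbd : ∀ i, ν i ∈ Icc (-R) R := by
      intro i
      have h1 := hν i
      have hz := g_lower_zero hQ hsl hsub (hintB _ (hφnΓ (g i)) (ν i))
      have h2 := g_lower_two hQ hsl hsub (hφnΓ (g i)) (hintB _ (hφnΓ (g i)) (ν i))
      have h1e := hone_le i
      have hQi := hQint i
      have hQi2 := neg_abs_le (∫ x, φn (g i) x ∂Q)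
      have hsub2 := hsIub i
      have hRa : L * MP - Dreg f L P Q + 2 + f 0 ≤ R := le_max_left _ _
      have hRb : L * MP - Dreg f L P Q + 2 + f 2 + 2*(L*MQ) ≤ R := le_max_right _ _
      constructor
      · linarith
      · linarith
    obtain ⟨ν', hν'mem, g2, hg2, hν'conv⟩ :=
      (isCompact_Icc (a := -R) (b := R)).tendsto_subseq hνbd
    set B : ℕ → ℝ := fun i => ∫ x, legendre f (φn (g i) x - ν i) ∂Q with hBdef
    have hBub : ∀ i, B i ≤ L * MP - Dreg f L P Q + 2 + R := by
      intro i
      have h1 := hν i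
      have h2 := hsIub i
      have h3 := hone_le i
      have h4 := (hνbd i).1
      simp only [hBdef]
      linarith
    have hBlb : ∀ i, -(L*MQ) - R ≤ B i := by
      intro i
      have h1 := g_lower_one hQ hf1 hsl hsub (hφnΓ (g i)) (hintB _ (hφnΓ (g i)) (ν i))
      have h2 := neg_abs_le (∫ x, φn (g i) x ∂Q)
      have := hQint i
      have h4 := (hνbd i).2
      simp only [hBdef]
      linarith
    have hBmem : ∀ j, B (g2 j) ∈ Icc (-(L*MQ) - R) (L * MP - Dreg f L P Q + 2 + R) :=
      fun j => ⟨hBlb (g2 j), hBub (g2 j)⟩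
    obtain ⟨ℓ, hℓmem, g3, hg3, hBconv⟩ :=
      (isCompact_Icc (a := -(L*MQ) - R) (b := L * MP - Dreg f L P Q + 2 + R)).tendsto_subseq hBmem
    set G : ℕ → ℕ := fun m => g2 (g3 m) with hGdef
    have hGmono : StrictMono G := hg2.comp hg3
    have hνG : Tendsto (fun m => ν (G m)) atTop (𝓝 ν') := by
      have := hν'conv.comp hg3.tendsto_atTop
      exact this
    have hBG : Tendsto (fun m => B (G m)) atTop (𝓝 ℓ) := hBconv
    have hsIG : Tendsto (fun m => sI (G m)) atTop (𝓝 σ) :=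
      hsconv.comp hGmono.tendsto_atTop
    have hlim1 : ν' + ℓ ≤ σ := by
      have hls : ∀ m, ν (G m) + B (G m) ≤ sI (G m) + 1/((m:ℝ)+1) := by
        intro m
        have h1 := hν (G m)
        have h2 : (1:ℝ)/((G m : ℝ)+1) ≤ 1/((m:ℝ)+1) := by
          apply one_div_le_one_div_of_le (by positivity)
          have hle : m ≤ G m := hGmono.le_apply
          exact_mod_cast Nat.add_le_add_right hle 1
        simp only [hBdef]
        exact le_trans (le_of_lt h1) (by linarith)
      have hT1 : Tendsto (fun m => ν (G m) + B (G m)) atTop (𝓝 (ν' + ℓ)) := hνG.add hBG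
      have hT2 : Tendsto (fun m => sI (G m) + 1/((m:ℝ)+1)) atTop (𝓝 (σ + 0)) :=
        hsIG.add honediv
      rw [add_zero] at hT2
      exact le_of_tendsto_of_tendsto' hT1 hT2 hls
    -- Fatou
    have hRabs : ∀ i, |ν i| ≤ R := by
      intro i
      rw [abs_le]
      exact ⟨(hνbd i).1, (hνbd i).2⟩
    have hν'abs : |ν'| ≤ R := by
      rw [abs_le]
      exact ⟨hν'mem.1, hν'mem.2⟩
    have hWint : Integrable (fun x : Euc d => L*‖x‖ + R) Q := (hQ.2.const_mul L).add (integrable_const R)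
    set W := ∫ x, (L*‖x‖ + R) ∂Q with hWdef
    have hφG : ∀ x, Tendsto (fun m => φn (g (G m)) x) atTop (𝓝 (φii x)) := fun x =>
      (hconvii x).comp hGmono.tendsto_atTop
    have hptu : ∀ x : Euc d, Tendsto (fun m => legendre f (φn (g (G m)) x - ν (G m)) + (L*‖x‖ + R))
        atTop (𝓝 (legendre f (φii x - ν') + (L*‖x‖ + R))) := by
      intro x
      apply Tendsto.add _ tendsto_const_nhds
      exact ((legendre_continuous hsl hsub).tendsto _).comp ((hφG x).sub hνG)
    have hu_nonneg : ∀ m x, 0 ≤ legendre f (φn (g (G m)) x - ν (G m)) + (L*‖x‖ + R) := by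
      intro m x
      have h1 := legendre_ge hsl hsub zero_le_one (φn (g (G m)) x - ν (G m))
      rw [one_mul, hf1, sub_zero] at h1
      have h2 := (abs_le.mp (hφnbd (g (G m)) x)).1
      have h3 := (abs_le.mp (hRabs (G m))).2
      linarith
    have huii_nonneg : ∀ x, 0 ≤ legendre f (φii x - ν') + (L*‖x‖ + R) := by
      intro x
      have h1 := legendre_ge hsl hsub zero_le_one (φii x - ν')
      rw [one_mul, hf1, sub_zero] at h1
      have h2 := (abs_le.mp (hbdii x)).1
      have h3 := (abs_le.mp hν'abs).2
      linarith
    have humeas : ∀ m, Measurable fun x : Euc d =>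
        ENNReal.ofReal (legendre f (φn (g (G m)) x - ν (G m)) + (L*‖x‖ + R)) := by
      intro m
      apply Measurable.ennreal_ofReal
      apply Continuous.measurable
      exact (((legendre_continuous hsl hsub).comp
        ((gammaL_continuous (hφnΓ (g (G m)))).sub continuous_const)).add
        ((continuous_const.mul continuous_norm).add continuous_const))
    have huint : ∀ m, Integrable
        (fun x => legendre f (φn (g (G m)) x - ν (G m)) + (L*‖x‖ + R)) Q :=
      fun m => (hintB _ (hφnΓ (g (G m))) (ν (G m))).add hWint
    have huiiint : Integrable (fun x => legendre f (φii x - ν') + (L*‖x‖ + R)) Q :=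
      (hintB _ hΓii ν').add hWint
    have key2 : (∫⁻ x, ENNReal.ofReal (legendre f (φii x - ν') + (L*‖x‖ + R)) ∂Q)
        ≤ atTop.liminf fun m =>
          ∫⁻ x, ENNReal.ofReal (legendre f (φn (g (G m)) x - ν (G m)) + (L*‖x‖ + R)) ∂Q := by
      have hpt : ∀ x : Euc d, ENNReal.ofReal (legendre f (φii x - ν') + (L*‖x‖ + R))
          = atTop.liminf fun m =>
            ENNReal.ofReal (legendre f (φn (g (G m)) x - ν (G m)) + (L*‖x‖ + R)) := by
        intro x
        exact ((ENNReal.continuous_ofReal.tendsto _).comp (hptu x)).liminf_eq.symm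
      calc (∫⁻ x, ENNReal.ofReal (legendre f (φii x - ν') + (L*‖x‖ + R)) ∂Q)
          = ∫⁻ x, atTop.liminf (fun m =>
            ENNReal.ofReal (legendre f (φn (g (G m)) x - ν (G m)) + (L*‖x‖ + R))) ∂Q := by
            apply lintegral_congr
            intro x
            exact hpt x
        _ ≤ _ := lintegral_liminf_le humeas
    have key3 : ∀ m, (∫⁻ x, ENNReal.ofReal
        (legendre f (φn (g (G m)) x - ν (G m)) + (L*‖x‖ + R)) ∂Q)
        = ENNReal.ofReal (B (G m) + W) := by
      intro m
      rw [← ofReal_integral_eq_lintegral_ofReal (huint m)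
        (Eventually.of_forall (hu_nonneg m))]
      congr 1
      rw [integral_add (hintB _ (hφnΓ (g (G m))) (ν (G m))) hWint]
    have key4 : Tendsto (fun m => ENNReal.ofReal (B (G m) + W)) atTop
        (𝓝 (ENNReal.ofReal (ℓ + W))) :=
      (ENNReal.continuous_ofReal.tendsto _).comp (hBG.add tendsto_const_nhds)
    have key5 : ENNReal.ofReal (∫ x, (legendre f (φii x - ν') + (L*‖x‖ + R)) ∂Q)
        = ∫⁻ x, ENNReal.ofReal (legendre f (φii x - ν') + (L*‖x‖ + R)) ∂Q :=
      ofReal_integral_eq_lintegral_ofReal huiiint (Eventually.of_forall huii_nonneg)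
    have hliminf_eq : (atTop.liminf fun m =>
        ∫⁻ x, ENNReal.ofReal (legendre f (φn (g (G m)) x - ν (G m)) + (L*‖x‖ + R)) ∂Q)
        = ENNReal.ofReal (ℓ + W) := by
      have : (fun m => ∫⁻ x, ENNReal.ofReal
          (legendre f (φn (g (G m)) x - ν (G m)) + (L*‖x‖ + R)) ∂Q)
          = fun m => ENNReal.ofReal (B (G m) + W) := funext key3
      rw [this]
      exact key4.liminf_eq
    have hnn : 0 ≤ ℓ + W := by
      have hTB : Tendsto (fun m => B (G m) + W) atTop (𝓝 (ℓ + W)) := hBG.add tendsto_const_nhds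
      apply ge_of_tendsto hTB
      apply Eventually.of_forall
      intro m
      have : 0 ≤ ∫ x, (legendre f (φn (g (G m)) x - ν (G m)) + (L*‖x‖ + R)) ∂Q :=
        integral_nonneg (hu_nonneg m)
      rw [integral_add (hintB _ (hφnΓ (g (G m))) (ν (G m))) hWint] at this
      exact this
    have hFatou : (∫ x, legendre f (φii x - ν') ∂Q) ≤ ℓ := by
      have h1 : ENNReal.ofReal (∫ x, (legendre f (φii x - ν') + (L*‖x‖ + R)) ∂Q)
          ≤ ENNReal.ofReal (ℓ + W) := by
        rw [key5]
        rw [← hliminf_eq]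
        exact key2
      have h2 := (ENNReal.ofReal_le_ofReal_iff hnn).mp h1
      rw [integral_add (hintB _ hΓii ν') hWint] at h2
      linarith
    -- conclusion
    have hfin : sInf (Set.range fun νv : ℝ => νv + ∫ x, legendre f (φii x - νv) ∂Q) ≤ σ := by
      have h1 : sInf (Set.range fun νv : ℝ => νv + ∫ x, legendre f (φii x - νv) ∂Q)
          ≤ ν' + ∫ x, legendre f (φii x - ν') ∂Q := csInf_le (hA _ hΓii) ⟨ν', rfl⟩
      linarith
    refine ⟨φii, hΓii, le_antisymm (hDle _ hΓii) ?_⟩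
    unfold dualObj
    rw [hσdef] at hfin
    linarith

end
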